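/- Let h_1(x) = x_{12} − 3x_{13} − x_{23} + 8x_{14} + 2x_{24} + 2x_{34} and h_2(x) = 2x_{12} + x_{13} − 5x_{23} + x_{14} − 3x_{24} + x_{34}. The vector space of real homogeneous quadratic polynomials in the six variables that vanish identically on each of the three linear subspaces {x_{13} = h_1 = 0}, {x_{12} = x_{14} = x_{34} = 0}, {x_{23} = x_{24} = h_2 = 0} of ℝ^6 is exactly one-dimensional, spanned by a = 2x_{12}^2 + x_{12}x_{13} + 17x_{12}x_{14} + 8x_{13}x_{14} + 8x_{14}^2 − 2x_{12}x_{23} − x_{14}x_{23} + 4x_{12}x_{24} + 2x_{14}x_{24} + 5x_{12}x_{34} + 2x_{13}x_{34} + 10x_{14}x_{34} − x_{23}x_{34} + 2x_{24}x_{34} + 2x_{34}^2. -/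

import Mathlib

/-!
The conditions are linear in `q`, so the homogeneous quadrics vanishing on the three subspaces
form a subspace of the 21-dimensional space of quadrics. It contains `aP8`, which lies in the ideal
generated by the linear forms cutting out each subspace. Conversely, sampling a quadric in the
subspace at the vectors `e_a` and `e_a + e_b` of a basis of each of the three linear spaces gives
22 linear equations on its 21 coefficients; they have rank 20 and force every coefficient to vanish
once the coefficient of `x₃₄²` does. Hence evaluation at `e₃₄` is injective on the subspace, which
is therefore the line through `aP8`.
-/

open MvPolynomial

/-- `h₁ = x₁₂ − 3x₁₃ − x₂₃ + 8x₁₄ + 2x₂₄ + 2x₃₄`; coordinates of `ℝ^6` are ordered as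
`(x₁₂, x₁₃, x₂₃, x₁₄, x₂₄, x₃₄)`, i.e. indices `0,…,5`. -/
noncomputable def h18 : MvPolynomial (Fin 6) ℝ :=
  X 0 - C 3 * X 1 - X 2 + C 8 * X 3 + C 2 * X 4 + C 2 * X 5

/-- `h₂ = 2x₁₂ + x₁₃ − 5x₂₃ + x₁₄ − 3x₂₄ + x₃₄`. -/
noncomputable def h28 : MvPolynomial (Fin 6) ℝ :=
  C 2 * X 0 + X 1 - C 5 * X 2 + X 3 - C 3 * X 4 + X 5

/-- The unique adjoint quadric of the associated polytope in Example 5.5. -/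
noncomputable def aP8 : MvPolynomial (Fin 6) ℝ :=
  C 2 * X 0 ^ 2 + X 0 * X 1 + C 17 * X 0 * X 3 + C 8 * X 1 * X 3 + C 8 * X 3 ^ 2 -
    C 2 * X 0 * X 2 - X 3 * X 2 + C 4 * X 0 * X 4 + C 2 * X 3 * X 4 + C 5 * X 0 * X 5 +
    C 2 * X 1 * X 5 + C 10 * X 3 * X 5 - X 2 * X 5 + C 2 * X 4 * X 5 + C 2 * X 5 ^ 2

open Finsupp

section
variable {σ R : Type*}

lemma Finsupp.exists_eq_single_add_single_of_degree_eq_two [LinearOrder σ] {m : σ →₀ ℕ}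
    (hm : m.degree = 2) : ∃ i j, i ≤ j ∧ m = single i 1 + single j 1 := by
  have hcard : Multiset.card (toMultiset m) = 2 := by
    rw [card_toMultiset, ← hm, degree_apply]; rfl
  obtain ⟨a, b, hab⟩ := Multiset.card_eq_two.mp hcard
  have hm' : m = single a 1 + single b 1 := by
    rw [toMultiset_eq_iff.mp hab, Multiset.insert_eq_cons, ← Multiset.singleton_add,
      Multiset.toFinsupp_add, Multiset.toFinsupp_singleton, Multiset.toFinsupp_singleton]
  rcases le_total a b with h | h
  · exact ⟨a, b, h, hm'⟩
  · exact ⟨b, a, h, hm'.trans (add_comm _ _)⟩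

lemma Finsupp.single_add_single_eq_iff_of_le [LinearOrder σ] {i j k l : σ} (hij : i ≤ j)
    (hkl : k ≤ l) :
    single i 1 + single j 1 = single k 1 + single l 1 ↔ i = k ∧ j = l := by
  rw [single_add_single_eq_single_add_single one_ne_zero one_ne_zero]
  constructor
  · rintro (h | ⟨-, rfl, rfl⟩ | ⟨h, -⟩)
    · exact h
    · exact ⟨le_antisymm hij hkl, le_antisymm hkl hij⟩
    · simp at h
  · exact Or.inl

variable [CommSemiring R]

lemma MvPolynomial.IsHomogeneous.eq_zero_of_coeff_single_add_single [LinearOrder σ]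
    {q : MvPolynomial σ R} (hq : q.IsHomogeneous 2)
    (h : ∀ i j, i ≤ j → coeff (single i 1 + single j 1) q = 0) : q = 0 := by
  ext m
  by_cases hm : m.degree = 2
  · obtain ⟨i, j, hij, rfl⟩ := exists_eq_single_add_single_of_degree_eq_two hm
    simpa using h i j hij
  · simpa using hq.coeff_eq_zero hm

lemma MvPolynomial.IsHomogeneous.eq_sum_single_add_single [LinearOrder σ] [Fintype σ]
    {q : MvPolynomial σ R} (hq : q.IsHomogeneous 2) :
    q = ∑ i, ∑ j, if i ≤ j then monomial (single i 1 + single j 1)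
      (coeff (single i 1 + single j 1) q) else 0 := by
  ext m
  simp only [coeff_sum, apply_ite (coeff m), coeff_monomial, coeff_zero]
  by_cases hm : m.degree = 2
  · obtain ⟨a, b, hab, rfl⟩ := exists_eq_single_add_single_of_degree_eq_two hm
    have key : ∀ i j, (if i ≤ j then (if single i 1 + single j 1 = single a 1 + single b 1
        then coeff (single i 1 + single j 1) q else 0) else 0) =
        if i = a then (if j = b then coeff (single a 1 + single b 1) q else 0) else 0 := by
      intro i j
      by_cases hij : i ≤ j
      · simp only [hij, if_true, single_add_single_eq_iff_of_le hij hab, ite_and]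
        split_ifs <;> simp_all
      · simp only [hij, if_false]
        split_ifs <;> simp_all
    simp [key]
  · have hne : ∀ i j : σ, single i 1 + single j 1 ≠ m := fun i j h =>
      hm (h ▸ by simp [map_add, degree_single])
    simp [hne, hq.coeff_eq_zero hm]

lemma MvPolynomial.IsHomogeneous.eval_eq_sum [LinearOrder σ] [Fintype σ]
    {q : MvPolynomial σ R} (hq : q.IsHomogeneous 2) (x : σ → R) :
    eval x q =
      ∑ i, ∑ j, if i ≤ j then coeff (single i 1 + single j 1) q * (x i * x j) else 0 := by
  conv_lhs => rw [hq.eq_sum_single_add_single]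
  simp [apply_ite (eval x), eval_monomial, Finsupp.prod_add_index, pow_add]
end

theorem Submodule.eq_span_singleton_of_inf_ker_eq_bot {K V : Type*} [Field K] [AddCommGroup V]
    [Module K V] {P : Submodule K V} {f : V →ₗ[K] K} {v : V} (hv : v ∈ P) (hfv : f v ≠ 0)
    (h : P ⊓ LinearMap.ker f = ⊥) : P = K ∙ v := by
  refine le_antisymm (fun w hw => ?_) ((span_singleton_le_iff_mem v P).mpr hv)
  have hmem : w - (f w / f v) • v ∈ P ⊓ LinearMap.ker f :=
    ⟨P.sub_mem hw (P.smul_mem _ hv), by simp [hfv]⟩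
  rw [h, mem_bot, sub_eq_zero] at hmem
  exact mem_span_singleton.mpr ⟨_, hmem.symm⟩

namespace OctahedronAdjoint

def L₁ : Set (Fin 6 → ℝ) := {x | x 1 = 0 ∧ eval x h18 = 0}

def L₂ : Set (Fin 6 → ℝ) := {x | x 0 = 0 ∧ x 3 = 0 ∧ x 5 = 0}

def L₃ : Set (Fin 6 → ℝ) := {x | x 2 = 0 ∧ x 4 = 0 ∧ eval x h28 = 0}

noncomputable def adjointQuadrics : Submodule ℝ (MvPolynomial (Fin 6) ℝ) :=
  homogeneousSubmodule (Fin 6) ℝ 2 ⊓ (vanishingIdeal ℝ (L₁ ∪ L₂ ∪ L₃)).restrictScalars ℝ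

lemma mem_adjointQuadrics_iff {q : MvPolynomial (Fin 6) ℝ} :
    q ∈ adjointQuadrics ↔ q.IsHomogeneous 2 ∧
      (∀ x : Fin 6 → ℝ, x 1 = 0 → eval x h18 = 0 → eval x q = 0) ∧
      (∀ x : Fin 6 → ℝ, x 0 = 0 → x 3 = 0 → x 5 = 0 → eval x q = 0) ∧
      (∀ x : Fin 6 → ℝ, x 2 = 0 → x 4 = 0 → eval x h28 = 0 → eval x q = 0) := by
  simp [adjointQuadrics, L₁, L₂, L₃, aeval_eq_eval, or_imp, forall_and, and_assoc]

lemma aP8_eq_X_one_mul_add_h18_mul :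
    aP8 = X 1 * (7 * X 0 + 11 * X 3 + 5 * X 5) + h18 * (2 * X 0 + X 3 + X 5) := by
  simp only [aP8, h18, map_ofNat]
  ring

lemma aP8_eq_X_zero_mul_add_X_three_mul_add_X_five_mul :
    aP8 = X 0 * (2 * X 0 + X 1 - 2 * X 2 + 17 * X 3 + 4 * X 4 + 5 * X 5) +
      X 3 * (8 * X 1 - X 2 + 8 * X 3 + 2 * X 4 + 10 * X 5) +
      X 5 * (2 * X 1 - X 2 + 2 * X 4 + 2 * X 5) := by
  simp only [aP8, map_ofNat]
  ring

lemma aP8_eq_X_two_mul_add_X_four_mul_add_h28_mul :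
    aP8 = X 2 * (3 * X 0 + 39 * X 3 + 9 * X 5) + X 4 * (7 * X 0 + 26 * X 3 + 8 * X 5) +
      h28 * (X 0 + 8 * X 3 + 2 * X 5) := by
  simp only [aP8, h28, map_ofNat]
  ring

lemma isHomogeneous_aP8 : aP8.IsHomogeneous 2 := by
  unfold aP8
  repeat' first
  | apply IsHomogeneous.add
  | apply IsHomogeneous.sub
  | with_reducible_and_instances exact (isHomogeneous_X _ _).mul (isHomogeneous_X _ _)
  | with_reducible_and_instances exact (isHomogeneous_C _ _).mul ((isHomogeneous_X _ _).pow 2)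
  | with_reducible_and_instances
      exact ((isHomogeneous_C _ _).mul (isHomogeneous_X _ _)).mul (isHomogeneous_X _ _)

lemma aP8_mem_adjointQuadrics : aP8 ∈ adjointQuadrics := by
  refine mem_adjointQuadrics_iff.mpr ⟨isHomogeneous_aP8, fun x h1 hh => ?_,
    fun x h0 h3 h5 => ?_, fun x h2 h4 hh => ?_⟩
  · simp [aP8_eq_X_one_mul_add_h18_mul, h1, hh]
  · simp [aP8_eq_X_zero_mul_add_X_three_mul_add_X_five_mul, h0, h3, h5]
  · simp [aP8_eq_X_two_mul_add_X_four_mul_add_h28_mul, h2, h4, hh]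

lemma eval_single_five_aP8 : eval (Pi.single 5 1) aP8 = 2 := by
  simp [aP8]

lemma adjointQuadrics_inf_ker_eval_eq_bot :
    adjointQuadrics ⊓ LinearMap.ker (aeval (Pi.single 5 1 : Fin 6 → ℝ)).toLinearMap = ⊥ := by
  refine (Submodule.eq_bot_iff _).mpr fun q ⟨hq, h₅⟩ => ?_
  obtain ⟨hhom, h₁, h₂, h₃⟩ := mem_adjointQuadrics_iff.mp hq
  replace h₅ : eval (Pi.single 5 1) q = 0 := h₅
  replace h₁ (a b c d : ℝ) : eval ![a - 8 * b - 2 * c - 2 * d, 0, a, b, c, d] q = 0 :=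
    h₁ _ rfl (by simp [h18]; ring)
  replace h₂ (a b c : ℝ) : eval ![0, a, b, 0, c, 0] q = 0 := h₂ _ rfl rfl rfl
  replace h₃ (a b c : ℝ) : eval ![a, b, 0, c, 0, -2 * a - b - c] q = 0 :=
    h₃ _ rfl rfl (by simp [h28])
  refine hhom.eq_zero_of_coeff_single_add_single ?_
  set c := fun i j : Fin 6 => coeff (single i 1 + single j 1) q
  have E : ∀ x, eval x q = ∑ i, ∑ j, if i ≤ j then c i j * (x i * x j) else 0 := hhom.eval_eq_sum
  simp [E, Fin.sum_univ_six] at h₁ h₂ h₃ h₅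
  have := h₁ 1 0 0 0; have := h₁ 0 1 0 0; have := h₁ 0 0 1 0; have := h₁ 0 0 0 1
  have := h₁ 1 1 0 0; have := h₁ 1 0 1 0; have := h₁ 1 0 0 1; have := h₁ 0 1 1 0
  have := h₁ 0 1 0 1; have := h₁ 0 0 1 1
  have := h₂ 1 0 0; have := h₂ 0 1 0; have := h₂ 0 0 1
  have := h₂ 1 1 0; have := h₂ 1 0 1; have := h₂ 0 1 1
  have := h₃ 1 0 0; have := h₃ 0 1 0; have := h₃ 0 0 1
  have := h₃ 1 1 0; have := h₃ 1 0 1; have := h₃ 0 1 1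
  clear h₁ h₂ h₃ E
  norm_num at *
  suffices ∀ i j, i ≤ j → c i j = 0 from this
  intro i j hij
  fin_cases i <;> fin_cases j <;>
    simp only [Fin.reduceFinMk, Fin.zero_eta, Fin.mk_one, Fin.reduceLE] at hij ⊢ <;>
    first | contradiction | linarith

lemma adjointQuadrics_eq_span : adjointQuadrics = ℝ ∙ aP8 :=
  Submodule.eq_span_singleton_of_inf_ker_eq_bot aP8_mem_adjointQuadrics
    (by simp [aeval_eq_eval, eval_single_five_aP8]) adjointQuadrics_inf_ker_eval_eq_bot

lemma aP8_ne_zero : aP8 ≠ 0 := fun h => by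
  simpa [h] using eval_single_five_aP8

end OctahedronAdjoint

open OctahedronAdjoint in
theorem stmt8 :
    aP8 ≠ 0 ∧
    {q : MvPolynomial (Fin 6) ℝ |
        q.IsHomogeneous 2 ∧
        (∀ x : Fin 6 → ℝ, x 1 = 0 → eval x h18 = 0 → eval x q = 0) ∧
        (∀ x : Fin 6 → ℝ, x 0 = 0 → x 3 = 0 → x 5 = 0 → eval x q = 0) ∧
        (∀ x : Fin 6 → ℝ, x 2 = 0 → x 4 = 0 → eval x h28 = 0 → eval x q = 0)} =
      {q | ∃ t : ℝ, q = t • aP8} := by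
  refine ⟨aP8_ne_zero, Set.ext fun q => mem_adjointQuadrics_iff.symm.trans ?_⟩
  rw [adjointQuadrics_eq_span, Submodule.mem_span_singleton]
  exact exists_congr fun t => eq_comm
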